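/- Let T, p, q, P, Q be as in the setup with Tr(P) = Tr(Q) = 1. If T(P) = I_m or T*(Q) = I_n, then cap(T, P, Q) ≤ 1. -/

import Mathlib

open Matrix BigOperators

noncomputable section

/-- `η_j` : the projection onto the first `j` coordinates, as a `j × k` matrix. -/
def proj (j k : ℕ) : Matrix (Fin j) (Fin k) ℂ :=
  Matrix.of fun i l => if (i : ℕ) = (l : ℕ) then 1 else 0

/-- `Δa_j = a_j − a_{j+1}`, with the convention `a_{k+1} = 0`. -/
def delta {k : ℕ} (a : Fin k → ℝ) (j : Fin k) : ℝ :=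
  a j - (if h : (j : ℕ) + 1 < k then a ⟨(j : ℕ) + 1, h⟩ else 0)

/-- Integer version of `delta`. -/
def deltaNat {k : ℕ} (a : Fin k → ℕ) (j : Fin k) : ℕ :=
  a j - (if h : (j : ℕ) + 1 < k then a ⟨(j : ℕ) + 1, h⟩ else 0)

/-- The relative determinant `det(diag a, X) = ∏_j det(η_j X η_j†)^{Δa_j}` (real exponents,
with the convention `0 ^ 0 = 1`). -/
def relDet {k : ℕ} (a : Fin k → ℝ) (X : Matrix (Fin k) (Fin k) ℂ) : ℝ :=
  ∏ j : Fin k,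
    ((proj ((j : ℕ) + 1) k * X * (proj ((j : ℕ) + 1) k)ᴴ).det.re) ^ (delta a j)

/-- Complex relative determinant for integral weights. -/
def relDetC {k : ℕ} (a : Fin k → ℕ) (X : Matrix (Fin k) (Fin k) ℂ) : ℂ :=
  ∏ j : Fin k,
    ((proj ((j : ℕ) + 1) k * X * (proj ((j : ℕ) + 1) k)ᴴ).det) ^ (deltaNat a j)

/-- The completely positive map `T(X) = Σ A_i X A_i†` with Kraus operators `A i`. -/
def cpMap {ι κ : Type*} [Fintype ι] {r : ℕ} (A : Fin r → Matrix κ ι ℂ)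
    (X : Matrix ι ι ℂ) : Matrix κ κ ℂ :=
  ∑ i, A i * X * (A i)ᴴ

/-- The dual completely positive map `T*(Y) = Σ A_i† Y A_i`. -/
def cpDual {ι κ : Type*} [Fintype κ] {r : ℕ} (A : Fin r → Matrix κ ι ℂ)
    (Y : Matrix κ κ ℂ) : Matrix ι ι ℂ :=
  ∑ i, (A i)ᴴ * Y * A i

/-- Frobenius norm `‖A‖ = √(Tr A Aᴴ)`. -/
def frob {ι κ : Type*} [Fintype ι] [Fintype κ] (A : Matrix ι κ ℂ) : ℝ :=
  Real.sqrt (A * Aᴴ).trace.re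

/-- Upper triangular predicate. -/
def UT {k : ℕ} (g : Matrix (Fin k) (Fin k) ℂ) : Prop :=
  ∀ i j : Fin k, j < i → g i j = 0

/-- Capacity with specified marginals:
`cap(T,P,Q) = inf over invertible upper triangular h of det(Q, T(hPh†)) / det(P, h†h)`. -/
def cap {n m r : ℕ} (A : Fin r → Matrix (Fin m) (Fin n) ℂ)
    (p : Fin n → ℝ) (q : Fin m → ℝ) : ℝ :=
  sInf { x : ℝ | ∃ h : Matrix (Fin n) (Fin n) ℂ, IsUnit h.det ∧ UT h ∧
    x = relDet q (cpMap A (h * Matrix.diagonal (fun j => (p j : ℂ)) * hᴴ)) /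
        relDet p (hᴴ * h) }

/-- Span of the first `i` standard basis vectors of `ℂ^k`. -/
def coordSub (k i : ℕ) : Submodule ℂ (Fin k → ℂ) where
  carrier := { x | ∀ l : Fin k, i ≤ (l : ℕ) → x l = 0 }
  add_mem' := by intro a b ha hb l hl; simp [ha l hl, hb l hl]
  zero_mem' := by intro l _; rfl
  smul_mem' := by intro c x hx l hl; simp [hx l hl]

/-- `(L, R)` is a `T`-independent pair: `A_i R ⊥ L` for all `i`. -/
def TIndep {n m r : ℕ} (A : Fin r → Matrix (Fin m) (Fin n) ℂ)
    (L : Submodule ℂ (Fin m → ℂ)) (R : Submodule ℂ (Fin n → ℂ)) : Prop :=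
  ∀ i : Fin r, ∀ x ∈ R, ∀ y ∈ L, star y ⬝ᵥ (A i).mulVec x = 0

/-- `(P,Q)`-rank-nondecreasingness. -/
def rankNonDec {n m r : ℕ} (A : Fin r → Matrix (Fin m) (Fin n) ℂ)
    (p : Fin n → ℝ) (q : Fin m → ℝ) : Prop :=
  ∀ L : Submodule ℂ (Fin m → ℂ), ∀ R : Submodule ℂ (Fin n → ℂ), TIndep A L R →
    (∑ i : Fin m, delta q i * (Module.finrank ℂ ↥(coordSub m ((i : ℕ) + 1) ⊓ L) : ℝ)) +
      (∑ j : Fin n, delta p j * (Module.finrank ℂ ↥(coordSub n ((j : ℕ) + 1) ⊓ R) : ℝ))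
      ≤ ∑ j, p j

/-- `λ'_{i+1}`: number of parts of `lam` that are `> i` (0-indexed conjugate partition). -/
def conj' {k : ℕ} (lam : Fin k → ℕ) (i : ℕ) : ℕ :=
  (Finset.univ.filter fun j : Fin k => i < lam j).card

lemma conj'_le {k : ℕ} (lam : Fin k → ℕ) (i : ℕ) : conj' lam i ≤ k := by
  classical
  calc conj' lam i ≤ Finset.univ.card := Finset.card_filter_le _ _
    _ = k := by simp

/-- Index set for the blocks of `G_λ`; it has cardinality `Σ_i λ'_i = Σ_j λ_j`. -/
abbrev lamIdx {k : ℕ} (lam : Fin k → ℕ) : Type :=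
  Σ i : Fin (Finset.univ.sup lam), Fin (conj' lam (i : ℕ))

/-- The gadget map `G_λ(X) = ⊕_{i=1}^{λ_1} η_{λ'_i} X η_{λ'_i}†`. -/
def Gmap {k : ℕ} (lam : Fin k → ℕ) (X : Matrix (Fin k) (Fin k) ℂ) :
    Matrix (lamIdx lam) (lamIdx lam) ℂ := fun s t =>
  if s.1 = t.1 then
    X (Fin.castLE (conj'_le lam (s.1 : ℕ)) s.2) (Fin.castLE (conj'_le lam (t.1 : ℕ)) t.2)
  else 0

/-- The adjoint `G_λ*` of the gadget map with respect to the trace inner product. -/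
def GmapAdj {k : ℕ} (lam : Fin k → ℕ) (Y : Matrix (lamIdx lam) (lamIdx lam) ℂ) :
    Matrix (Fin k) (Fin k) ℂ := fun a b =>
  ∑ i : Fin (Finset.univ.sup lam),
    if h : (a : ℕ) < conj' lam (i : ℕ) ∧ (b : ℕ) < conj' lam (i : ℕ) then
      Y ⟨i, ⟨(a : ℕ), h.1⟩⟩ ⟨i, ⟨(b : ℕ), h.2⟩⟩
    else 0

/-- The reduction `trun_{P,Q} T = G_q ∘ T ∘ G_p*`. -/
def trun {n m r : ℕ} (A : Fin r → Matrix (Fin m) (Fin n) ℂ) (p : Fin n → ℕ) (q : Fin m → ℕ)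
    (X : Matrix (lamIdx p) (lamIdx p) ℂ) : Matrix (lamIdx q) (lamIdx q) ℂ :=
  Gmap q (cpMap A (GmapAdj p X))

/-- The dual of the reduction: `(trun_{P,Q} T)* = G_p ∘ T* ∘ G_q*`. -/
def trunDual {n m r : ℕ} (A : Fin r → Matrix (Fin m) (Fin n) ℂ) (p : Fin n → ℕ) (q : Fin m → ℕ)
    (Y : Matrix (lamIdx q) (lamIdx q) ℂ) : Matrix (lamIdx p) (lamIdx p) ℂ :=
  Gmap p (cpDual A (GmapAdj q Y))

/-- Shannon entropy with convention `0 · log 0 = 0` (note `Real.log 0 = 0`). -/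
def entropy {k : ℕ} (p : Fin k → ℝ) : ℝ := -∑ j, p j * Real.log (p j)

/-- The distance-to-target measure `ds_{P,Q}(T)`. -/
def ds {n m r : ℕ} (A : Fin r → Matrix (Fin m) (Fin n) ℂ)
    (p : Fin n → ℝ) (q : Fin m → ℝ) : ℝ :=
  (∑ j : Fin n, delta p j *
      (frob (proj ((j : ℕ) + 1) n *
        (cpDual A (Matrix.diagonal fun i => (q i : ℂ)) - 1) * (proj ((j : ℕ) + 1) n)ᴴ)) ^ 2) +
    ∑ i : Fin m, delta q i *
      (frob (proj ((i : ℕ) + 1) m *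
        (cpMap A (Matrix.diagonal fun j => (p j : ℂ)) - 1) * (proj ((i : ℕ) + 1) m)ᴴ)) ^ 2

/-- `(u_1,…,u_n)` can be approximately put in `Q`-isotropic position with respect to `p`. -/
def approxIso {m n : ℕ} (u : Fin n → Fin m → ℂ) (p : Fin n → ℝ)
    (Q : Matrix (Fin m) (Fin m) ℂ) : Prop :=
  ∀ ε : ℝ, 0 < ε → ∃ B : Matrix (Fin m) (Fin m) ℂ, IsUnit B.det ∧
    frob ((∑ i : Fin n,
      (((p i / ∑ a, Complex.normSq (B.mulVec (u i) a)) : ℝ) : ℂ) •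
        Matrix.vecMulVec (B.mulVec (u i)) (star (B.mulVec (u i)))) - Q) ≤ ε

/-!
Take `h = 1` in the infimum: `cap(T, P, Q) ≤ det(Q, T(P))`. If `T(P) = I` this is `1`. If
`T*(Q) = I`, then `Σ_a q_a T(P)_{aa} = Tr(Q T(P)) = Tr(T*(Q) P) = Tr P = 1`. Each leading block
`M_j` of the positive semidefinite `M = T(P)` satisfies `det M_j ≤ exp(Tr M_j - j)` (from
`λ ≤ exp(λ - 1)` on eigenvalues), and Abel summation turns `Σ_j Δq_j (Tr M_j - j)` into
`Σ_a q_a (M_aa - 1) = 0`, so `det(Q, M) ≤ exp 0 = 1`.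
-/

open Finset ComplexOrder

lemma sum_range_sub_mul_sum_range {R : Type*} [CommRing R] (f c : ℕ → R) (k : ℕ) :
    ∑ j ∈ range k, (f j - f (j + 1)) * ∑ i ∈ range (j + 1), c i
      = ∑ i ∈ range k, f i * c i - f k * ∑ i ∈ range k, c i := by
  induction k with
  | zero => simp
  | succ k ih =>
    rw [sum_range_succ, ih, sum_range_succ (fun i => f i * c i), sum_range_succ c]
    ring

lemma sum_delta_mul_sum_castLE {k : ℕ} (a c : Fin k → ℝ) :
    ∑ j : Fin k, delta a j * ∑ i : Fin (j + 1), c (Fin.castLE j.isLt i) = ∑ i, a i * c i := by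
  set F : ℕ → ℝ := fun i => if h : i < k then a ⟨i, h⟩ else 0
  set C : ℕ → ℝ := fun i => if h : i < k then c ⟨i, h⟩ else 0
  have hdelta (j : Fin k) : delta a j = F j - F (j + 1) := by simp [delta, F]
  have hpartial (j : Fin k) :
      ∑ i : Fin (j + 1), c (Fin.castLE j.isLt i) = ∑ i ∈ range (j + 1), C i := by
    rw [← Fin.sum_univ_eq_sum_range]
    exact sum_congr rfl fun i _ => by simp only [C, dif_pos (i.isLt.trans_le j.isLt)]; rfl
  calc ∑ j : Fin k, delta a j * ∑ i : Fin (j + 1), c (Fin.castLE j.isLt i)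
      = ∑ j ∈ range k, (F j - F (j + 1)) * ∑ i ∈ range (j + 1), C i := by
        simp only [hdelta, hpartial]
        exact Fin.sum_univ_eq_sum_range (fun j => (F j - F (j + 1)) * ∑ i ∈ range (j + 1), C i) k
    _ = ∑ i ∈ range k, F i * C i := by simp [sum_range_sub_mul_sum_range, F]
    _ = ∑ i, a i * c i := by
        rw [← Fin.sum_univ_eq_sum_range]
        simp [F, C]

lemma delta_nonneg {k : ℕ} {a : Fin k → ℝ} (ha : Antitone a) (ha0 : ∀ j, 0 ≤ a j) (j : Fin k) :
    0 ≤ delta a j := by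
  unfold delta
  split_ifs with h
  · exact sub_nonneg.mpr (ha (Fin.mk_le_mk.mpr j.val.le_succ))
  · simpa using ha0 j

lemma proj_mul_mul_proj_conjTranspose {j k : ℕ} (hj : j ≤ k) (X : Matrix (Fin k) (Fin k) ℂ) :
    proj j k * X * (proj j k)ᴴ = X.submatrix (Fin.castLE hj) (Fin.castLE hj) := by
  have hcond (a : Fin j) (l : Fin k) : ((a : ℕ) = (l : ℕ)) = (Fin.castLE hj a = l) := by
    rw [eq_iff_iff, Fin.ext_iff]; rfl
  ext a b
  simp only [mul_apply, conjTranspose_apply, proj, of_apply, hcond, apply_ite (star : ℂ → ℂ),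
    star_one, star_zero, ite_mul, mul_ite, one_mul, mul_one, zero_mul, mul_zero, sum_ite_eq,
    mem_univ, if_true, submatrix_apply]

lemma relDet_one {k : ℕ} (a : Fin k → ℝ) : relDet a (1 : Matrix (Fin k) (Fin k) ℂ) = 1 := by
  refine prod_eq_one fun j _ => ?_
  rw [proj_mul_mul_proj_conjTranspose j.isLt, submatrix_one _ (Fin.castLE_injective _)]
  simp

lemma Matrix.PosSemidef.det_re_le_exp_trace_re_sub_card {ι : Type*} [Fintype ι] [DecidableEq ι]
    {N : Matrix ι ι ℂ} (hN : N.PosSemidef) :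
    N.det.re ≤ Real.exp (N.trace.re - Fintype.card ι) := by
  have hdet : N.det.re = ∏ i, hN.isHermitian.eigenvalues i := by
    rw [hN.isHermitian.det_eq_prod_eigenvalues]; norm_cast
  have htr : N.trace.re = ∑ i, hN.isHermitian.eigenvalues i := by
    rw [hN.isHermitian.trace_eq_sum_eigenvalues]; norm_cast
  rw [hdet, htr, ← nsmul_one (Fintype.card ι), ← card_univ, ← sum_const, ← sum_sub_distrib,
    Real.exp_sum]
  refine prod_le_prod (fun i _ => hN.eigenvalues_nonneg i) fun i _ => ?_
  linarith [Real.add_one_le_exp (hN.isHermitian.eigenvalues i - 1)]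

lemma Matrix.PosSemidef.det_re_nonneg {ι : Type*} [Fintype ι] [DecidableEq ι]
    {N : Matrix ι ι ℂ} (hN : N.PosSemidef) : 0 ≤ N.det.re :=
  (Complex.nonneg_iff.mp hN.det_nonneg).1

lemma relDet_nonneg {k : ℕ} (a : Fin k → ℝ) {X : Matrix (Fin k) (Fin k) ℂ}
    (hX : X.PosSemidef) : 0 ≤ relDet a X :=
  prod_nonneg fun _ _ => Real.rpow_nonneg (hX.mul_mul_conjTranspose_same _).det_re_nonneg _

lemma relDet_le_one {k : ℕ} {q : Fin k → ℝ} (hq : Antitone q) (hq0 : ∀ i, 0 ≤ q i)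
    (hq1 : ∑ i, q i = 1) {M : Matrix (Fin k) (Fin k) ℂ} (hM : M.PosSemidef)
    (hdiag : ∑ i, q i * (M i i).re = 1) : relDet q M ≤ 1 := by
  have hfactor (j : Fin k) :
      ((proj (j + 1) k * M * (proj (j + 1) k)ᴴ).det.re) ^ delta q j
        ≤ Real.exp (delta q j * ∑ i : Fin (j + 1),
            ((M (Fin.castLE j.isLt i) (Fin.castLE j.isLt i)).re - 1)) := by
    rw [proj_mul_mul_proj_conjTranspose j.isLt]
    have hblock := (hM.submatrix (Fin.castLE j.isLt)).det_re_le_exp_trace_re_sub_card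
    have htrace : (M.submatrix (Fin.castLE j.isLt) (Fin.castLE j.isLt)).trace.re
        - Fintype.card (Fin (j + 1))
        = ∑ i : Fin (j + 1), ((M (Fin.castLE j.isLt i) (Fin.castLE j.isLt i)).re - 1) := by
      simp [trace, Complex.re_sum, sum_sub_distrib]
    rw [mul_comm, Real.exp_mul, ← htrace]
    exact Real.rpow_le_rpow (hM.submatrix _).det_re_nonneg hblock (delta_nonneg hq hq0 j)
  calc relDet q M
      ≤ ∏ j : Fin k, Real.exp (delta q j * ∑ i : Fin (j + 1),
          ((M (Fin.castLE j.isLt i) (Fin.castLE j.isLt i)).re - 1)) :=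
        prod_le_prod (fun j _ => Real.rpow_nonneg
          (hM.mul_mul_conjTranspose_same _).det_re_nonneg _) fun j _ => hfactor j
    _ = 1 := by
        rw [← Real.exp_sum, sum_delta_mul_sum_castLE q fun i => (M i i).re - 1]
        simp [mul_sub, sum_sub_distrib, hdiag, hq1]

lemma posSemidef_diagonal_ofReal {ι : Type*} [Fintype ι] [DecidableEq ι] {p : ι → ℝ}
    (hp0 : ∀ j, 0 ≤ p j) : (diagonal fun j => (p j : ℂ)).PosSemidef :=
  posSemidef_diagonal_iff.mpr fun j => Complex.zero_le_real.mpr (hp0 j)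

lemma cpMap_posSemidef {ι κ : Type*} [Fintype ι] [Fintype κ] {r : ℕ} (A : Fin r → Matrix κ ι ℂ)
    {X : Matrix ι ι ℂ} (hX : X.PosSemidef) : (cpMap A X).PosSemidef :=
  sum_induction _ _ (fun _ _ => PosSemidef.add) .zero fun i _ => hX.mul_mul_conjTranspose_same (A i)

lemma trace_mul_cpMap {ι κ : Type*} [Fintype ι] [Fintype κ] {r : ℕ} (A : Fin r → Matrix κ ι ℂ)
    (Y : Matrix κ κ ℂ) (X : Matrix ι ι ℂ) : (Y * cpMap A X).trace = (cpDual A Y * X).trace := by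
  simp only [cpMap, cpDual, Matrix.mul_sum, Matrix.sum_mul, trace_sum]
  refine sum_congr rfl fun i _ => ?_
  rw [← Matrix.mul_assoc, trace_mul_comm, Matrix.mul_assoc, Matrix.mul_assoc]

lemma cap_le_relDet_cpMap {n m r : ℕ} (A : Fin r → Matrix (Fin m) (Fin n) ℂ)
    {p : Fin n → ℝ} (q : Fin m → ℝ) (hp0 : ∀ j, 0 ≤ p j) :
    cap A p q ≤ relDet q (cpMap A (diagonal fun j => (p j : ℂ))) := by
  refine csInf_le ⟨0, ?_⟩ ⟨1, by simp, fun i j hij => one_apply_ne hij.ne', by simp [relDet_one]⟩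
  rintro _ ⟨h, -, -, rfl⟩
  exact div_nonneg (relDet_nonneg _
    (cpMap_posSemidef A ((posSemidef_diagonal_ofReal hp0).mul_mul_conjTranspose_same h)))
    (relDet_nonneg _ (posSemidef_conjTranspose_mul_self h))

theorem stmt13_general {n m r : ℕ} (A : Fin r → Matrix (Fin m) (Fin n) ℂ)
    (p : Fin n → ℝ) (q : Fin m → ℝ)
    (hp0 : ∀ j, 0 ≤ p j) (hq : Antitone q) (hq0 : ∀ i, 0 ≤ q i)
    (hTrP : ∑ j, p j = 1) (hTrQ : ∑ i, q i = 1)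
    (hT : cpMap A (Matrix.diagonal fun j => (p j : ℂ)) = 1 ∨
          cpDual A (Matrix.diagonal fun i => (q i : ℂ)) = 1) :
    cap A p q ≤ 1 := by
  refine (cap_le_relDet_cpMap A q hp0).trans ?_
  rcases hT with hT | hT
  · rw [hT, relDet_one]
  · refine relDet_le_one hq hq0 hTrQ (cpMap_posSemidef A (posSemidef_diagonal_ofReal hp0)) ?_
    have htrace := congrArg Complex.re
      (trace_mul_cpMap A (diagonal fun i => (q i : ℂ)) (diagonal fun j => (p j : ℂ)))
    simpa [hT, trace, diagonal_mul, hTrP] using htrace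

/-- Lemma (capacity upper bound): if `Tr P = Tr Q = 1` and `T(P) = I_m` or `T*(Q) = I_n`,
then `cap(T, P, Q) ≤ 1`. -/
theorem stmt13 {n m r : ℕ} (A : Fin r → Matrix (Fin m) (Fin n) ℂ)
    (p : Fin n → ℝ) (q : Fin m → ℝ)
    (hp : Antitone p) (hp0 : ∀ j, 0 ≤ p j) (hq : Antitone q) (hq0 : ∀ i, 0 ≤ q i)
    (hTrP : ∑ j, p j = 1) (hTrQ : ∑ i, q i = 1)
    (hT : cpMap A (Matrix.diagonal fun j => (p j : ℂ)) = 1 ∨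
          cpDual A (Matrix.diagonal fun i => (q i : ℂ)) = 1) :
    cap A p q ≤ 1 :=
  stmt13_general A p q hp0 hq hq0 hTrP hTrQ hT
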